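/- arXiv:1511.03971 — 2 statements merged into one kernel-verified Lean document; each statement's English description precedes it below -/
import Mathlib

section
/- Let 1 ≤ p < ∞, 1 ≤ q ≤ ∞, k ∈ ℕ, and let S be a measurable subset of [0,1)^d. If a sequence {f_j} ⊂ L_q([0,1)^d) converges to f in L_q([0,1)^d), then var_p^k(f;S;L_q) ≤ liminf_{j→∞} var_p^k(f_j;S;L_q). -/
open MeasureTheory ENNReal Filter

noncomputable section

/-- A (half-open, axis-parallel) cube `x + [0,l)^d` in `ℝ^d`. -/
def IsCube (d : ℕ) (Q : Set (Fin d → ℝ)) : Prop :=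
  ∃ (x : Fin d → ℝ) (l : ℝ), 0 < l ∧
    Q = Set.univ.pi fun i => Set.Ico (x i) (x i + l)

/-- The half-open unit cube `[0,1)^d`. -/
def unitCube (d : ℕ) : Set (Fin d → ℝ) :=
  Set.univ.pi fun _ => Set.Ico (0 : ℝ) 1

/-- Dyadic subcubes `2^{-j}([0,1)^d + α)` of the unit cube `[0,1)^d`. -/
def IsDyadicCube (d : ℕ) (Q : Set (Fin d → ℝ)) : Prop :=
  ∃ (j : ℕ) (α : Fin d → ℕ), (∀ i, α i < 2 ^ j) ∧
    Q = Set.univ.pi fun i => Set.Ico ((α i : ℝ) / 2 ^ j) (((α i : ℝ) + 1) / 2 ^ j)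

/-- `E_k(f;S;L_q)`: best `L_q(S)`-approximation of `f` by polynomials in `d`
variables of total degree at most `k-1`. -/
def Ek (d k : ℕ) (q : ℝ≥0∞) (f : (Fin d → ℝ) → ℝ) (S : Set (Fin d → ℝ)) : ℝ≥0∞ :=
  ⨅ (m : MvPolynomial (Fin d) ℝ) (_ : m.totalDegree ≤ k - 1),
    eLpNorm (fun x => f x - MvPolynomial.eval x m) q (volume.restrict S)

/-- The `(k,p)`-variation of `f` on `S`, computed in `L_q`: the supremum over all
finite disjoint families of cubes contained in `S` of `(Σ_Q E_k(f;Q;L_q)^p)^{1/p}`. -/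
def varpk (d k : ℕ) (p : ℝ) (q : ℝ≥0∞) (f : (Fin d → ℝ) → ℝ) (S : Set (Fin d → ℝ)) : ℝ≥0∞ :=
  ⨆ (Δ : Finset (Set (Fin d → ℝ)))
    (_ : ∀ Q ∈ Δ, IsCube d Q ∧ Q ⊆ S)
    (_ : (Δ : Set (Set (Fin d → ℝ))).PairwiseDisjoint id),
    (∑ Q ∈ Δ, Ek d k q f Q ^ p) ^ (1 / p)

/-- The piecewise polynomial `Σ_{Q ∈ Δ} P_Q · 1_Q`. -/
def piecewisePoly (d : ℕ) (Δ : Finset (Set (Fin d → ℝ)))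
    (P : Set (Fin d → ℝ) → MvPolynomial (Fin d) ℝ) : (Fin d → ℝ) → ℝ :=
  fun x => ∑ Q ∈ Δ, Q.indicator (fun y => MvPolynomial.eval y (P Q)) x

end

/-
`E_k(·;Q;L_q)` is 1-Lipschitz for the `L_q(Q)` distance, and `L_q(Q)` is dominated by
`L_q([0,1)^d)` for every cube `Q ⊆ S`. Hence for a fixed disjoint family `Δ` of cubes in `S`,
Minkowski's inequality in `ℓ_p(Δ)` gives
`(Σ_Q E_k(f;Q)^p)^{1/p} ≤ var_p^k(f_j;S) + |Δ|^{1/p} ‖f_j - f‖_q`,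
and the error term tends to `0`. Taking the liminf in `j` and then the supremum over `Δ`
proves the claim.
-/

lemma Ek_le_eLpNorm_sub_add {d k : ℕ} {q : ℝ≥0∞} (hq : 1 ≤ q)
    {f g : (Fin d → ℝ) → ℝ} {Q : Set (Fin d → ℝ)}
    (hf : AEStronglyMeasurable f (volume.restrict Q))
    (hg : AEStronglyMeasurable g (volume.restrict Q)) :
    Ek d k q f Q ≤ eLpNorm (fun x => f x - g x) q (volume.restrict Q) + Ek d k q g Q := by
  simp only [Ek, ENNReal.add_iInf]
  refine le_iInf₂ fun m hm => (iInf₂_le m hm).trans ?_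
  have hsplit : (fun x => f x - MvPolynomial.eval x m) =
      (fun x => f x - g x) + (fun x => g x - MvPolynomial.eval x m) := by
    funext x
    simp only [Pi.add_apply]
    ring
  rw [hsplit]
  exact eLpNorm_add_le (hf.sub hg) (hg.sub (MvPolynomial.continuous_eval m).aestronglyMeasurable) hq

lemma Ek_le_eLpNorm_sub_add_of_subset {d k : ℕ} {q : ℝ≥0∞} (hq : 1 ≤ q)
    {f g : (Fin d → ℝ) → ℝ} {Q T : Set (Fin d → ℝ)} (hQT : Q ⊆ T)
    (hf : AEStronglyMeasurable f (volume.restrict T))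
    (hg : AEStronglyMeasurable g (volume.restrict T)) :
    Ek d k q f Q ≤ eLpNorm (fun x => g x - f x) q (volume.restrict T) + Ek d k q g Q := by
  have hμ : volume.restrict Q ≤ volume.restrict T := Measure.restrict_mono hQT le_rfl
  calc Ek d k q f Q
      ≤ eLpNorm (fun x => f x - g x) q (volume.restrict Q) + Ek d k q g Q :=
        Ek_le_eLpNorm_sub_add hq (hf.mono_measure hμ) (hg.mono_measure hμ)
    _ ≤ eLpNorm (fun x => f x - g x) q (volume.restrict T) + Ek d k q g Q := by gcongr
    _ = eLpNorm (fun x => g x - f x) q (volume.restrict T) + Ek d k q g Q :=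
        congrArg (· + Ek d k q g Q) (eLpNorm_sub_comm f g q _)

lemma ENNReal.rpow_sum_rpow_le_card_rpow_mul_add {ι : Type*} {s : Finset ι} {p : ℝ} (hp : 1 ≤ p)
    {a b : ι → ℝ≥0∞} {ε : ℝ≥0∞} (hab : ∀ i ∈ s, a i ≤ ε + b i) :
    (∑ i ∈ s, a i ^ p) ^ (1 / p) ≤ (s.card : ℝ≥0∞) ^ (1 / p) * ε + (∑ i ∈ s, b i ^ p) ^ (1 / p) := by
  have hp0 : 0 < p := zero_lt_one.trans_le hp
  calc (∑ i ∈ s, a i ^ p) ^ (1 / p)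
      ≤ (∑ i ∈ s, (ε + b i) ^ p) ^ (1 / p) := by
        gcongr with i hi
        exact hab i hi
    _ ≤ (∑ _i ∈ s, ε ^ p) ^ (1 / p) + (∑ i ∈ s, b i ^ p) ^ (1 / p) :=
        ENNReal.Lp_add_le _ _ _ hp
    _ = (s.card : ℝ≥0∞) ^ (1 / p) * ε + (∑ i ∈ s, b i ^ p) ^ (1 / p) := by
        rw [Finset.sum_const, nsmul_eq_mul, ENNReal.mul_rpow_of_nonneg _ _ (by positivity),
          ← ENNReal.rpow_mul, mul_one_div_cancel hp0.ne', ENNReal.rpow_one]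

lemma ENNReal.le_liminf_of_le_add_of_tendsto_zero {ι : Type*} {l : Filter ι} [l.NeBot] {a : ℝ≥0∞}
    {b e : ι → ℝ≥0∞} (hab : ∀ j, a ≤ b j + e j) (he : Tendsto e l (nhds 0)) :
    a ≤ liminf b l := by
  refine ENNReal.le_of_forall_pos_le_add fun δ hδ _ => ?_
  have hev : ∀ᶠ j in l, a ≤ b j + δ := by
    filter_upwards [he.eventually_lt_const (ENNReal.coe_pos.2 hδ)] with j hj
    exact (hab j).trans (add_le_add le_rfl hj.le)
  calc a ≤ liminf (fun j => b j + δ) l := le_liminf_of_le (by isBoundedDefault) hev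
    _ = liminf b l + δ := liminf_add_const l _ _ isCobounded_ge_of_top isBounded_ge_of_bot

lemma rpow_sum_Ek_rpow_le_varpk {d k : ℕ} {p : ℝ} {q : ℝ≥0∞} {f : (Fin d → ℝ) → ℝ}
    {S : Set (Fin d → ℝ)} {Δ : Finset (Set (Fin d → ℝ))} (hΔ : ∀ Q ∈ Δ, IsCube d Q ∧ Q ⊆ S)
    (hdisj : (Δ : Set (Set (Fin d → ℝ))).PairwiseDisjoint id) :
    (∑ Q ∈ Δ, Ek d k q f Q ^ p) ^ (1 / p) ≤ varpk d k p q f S :=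
  le_iSup₂_of_le Δ hΔ (le_iSup_of_le hdisj le_rfl)

theorem statement8_general (d k : ℕ) (p : ℝ) (q : ℝ≥0∞) (hp : 1 ≤ p) (hq : 1 ≤ q)
    (S : Set (Fin d → ℝ)) (hSsub : S ⊆ unitCube d)
    (f : (Fin d → ℝ) → ℝ) (F : ℕ → (Fin d → ℝ) → ℝ)
    (hF : ∀ j, MemLp (F j) q (volume.restrict (unitCube d)))
    (hf : MemLp f q (volume.restrict (unitCube d)))
    (hconv : Tendsto
      (fun j => eLpNorm (fun x => F j x - f x) q (volume.restrict (unitCube d)))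
      atTop (nhds 0)) :
    varpk d k p q f S ≤ liminf (fun j => varpk d k p q (F j) S) atTop := by
  refine iSup₂_le fun Δ hΔ => iSup_le fun hdisj => ?_
  set c : ℝ≥0∞ := (Δ.card : ℝ≥0∞) ^ (1 / p)
  have hc : c ≠ ⊤ := ENNReal.rpow_ne_top_of_nonneg (by positivity) (ENNReal.natCast_ne_top _)
  refine ENNReal.le_liminf_of_le_add_of_tendsto_zero (fun j => ?_)
    (by simpa using ENNReal.Tendsto.const_mul hconv (Or.inr hc))
  calc (∑ Q ∈ Δ, Ek d k q f Q ^ p) ^ (1 / p)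
      ≤ c * eLpNorm (fun x => F j x - f x) q (volume.restrict (unitCube d)) +
          (∑ Q ∈ Δ, Ek d k q (F j) Q ^ p) ^ (1 / p) :=
        ENNReal.rpow_sum_rpow_le_card_rpow_mul_add hp fun Q hQ =>
          Ek_le_eLpNorm_sub_add_of_subset hq ((hΔ Q hQ).2.trans hSsub)
            hf.aestronglyMeasurable (hF j).aestronglyMeasurable
    _ ≤ c * eLpNorm (fun x => F j x - f x) q (volume.restrict (unitCube d)) +
          varpk d k p q (F j) S := by
        gcongr
        exact rpow_sum_Ek_rpow_le_varpk hΔ hdisj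
    _ = _ := add_comm _ _

/-- Proposition 3.1, lower semicontinuity: if `f_j → f` in
`L_q([0,1)^d)` then `var_p^k(f;S;L_q) ≤ liminf_j var_p^k(f_j;S;L_q)`. -/
theorem statement8 (d k : ℕ) (p : ℝ) (q : ℝ≥0∞) (hp : 1 ≤ p) (hq : 1 ≤ q)
    (S : Set (Fin d → ℝ)) (hSmeas : MeasurableSet S) (hSsub : S ⊆ unitCube d)
    (f : (Fin d → ℝ) → ℝ) (F : ℕ → (Fin d → ℝ) → ℝ)
    (hF : ∀ j, MemLp (F j) q (volume.restrict (unitCube d)))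
    (hf : MemLp f q (volume.restrict (unitCube d)))
    (hconv : Tendsto
      (fun j => eLpNorm (fun x => F j x - f x) q (volume.restrict (unitCube d)))
      atTop (nhds 0)) :
    varpk d k p q f S ≤ liminf (fun j => varpk d k p q (F j) S) atTop :=
  statement8_general d k p q hp hq S hSsub f F hF hf hconv
end

section
/- Let 1 ≤ p < ∞, 1 ≤ q ≤ ∞, k ∈ ℕ, d ∈ ℕ, and suppose s := d(1/p − 1/q) satisfies 0 < s ≤ k. Let f be a C^∞ function on ℝ^d. Then var_p^k(f;S;L_q) → 0 as |S| → 0, uniformly over sets S in the σ-algebra generated by the dyadic subcubes of [0,1)^d; indeed var_p^k(f;S;L_q) ≤ c(k,d) · |S|^{1/p} · max_{|α|=k} sup_{[0,1]^d} |D^α f| for all such S, where c(k,d) depends only on k and d. -/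
/-!
On a cube `Q ⊆ [0,1)^d` with corner `x₀` and side `l`, the Taylor polynomial of `f` of degree
`k - 1` at `x₀` approximates `f` to within `d^k l^k M`, where `M` bounds all `k`-th order partial
derivatives on `[0,1]^d`: along the segment from `x₀` to `x`, the `k`-th derivative in the direction
`x - x₀` expands into `d^k` mixed partials, each equal to some `D^α f` with `|α| = k` because
partial derivatives of a smooth function commute. Hence
`E_k(f;Q;L_q)^p ≤ (d^k M)^p l^{(k + d/q)p} ≤ (d^k M)^p |Q|`, using `l ≤ 1` and `(k + d/q) p ≥ d`,
which is `s ≤ k`. Summing over disjoint cubes inside `S` bounds the `p`-th power of the variation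
by `(d^k M)^p |S|`.
-/

open MeasureTheory ENNReal Filter

noncomputable section

/-- The open unit cube `(0,1)^d`. -/
def openUnitCube (d : ℕ) : Set (Fin d → ℝ) :=
  Set.univ.pi fun _ => Set.Ioo (0 : ℝ) 1

/-- The partial derivative in the `i`-th coordinate direction. -/
def partialDeriv (d : ℕ) (i : Fin d) (φ : (Fin d → ℝ) → ℝ) : (Fin d → ℝ) → ℝ :=
  fun x => fderiv ℝ φ x (Pi.single i 1)

def partialDerivIter (d : ℕ) (i : Fin d) : ℕ → ((Fin d → ℝ) → ℝ) → ((Fin d → ℝ) → ℝ)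
  | 0 => id
  | n + 1 => fun φ => partialDeriv d i (partialDerivIter d i n φ)

/-- The mixed partial derivative `D^α = ∂^{α 0}_0 ⋯ ∂^{α (d-1)}_{d-1}`. -/
def multiDeriv (d : ℕ) (α : Fin d → ℕ) (φ : (Fin d → ℝ) → ℝ) : (Fin d → ℝ) → ℝ :=
  (List.finRange d).foldr (fun i ψ => partialDerivIter d i (α i) ψ) φ

end

open Set Finset
open scoped Nat

section Taylor

variable {E F : Type*} [NormedAddCommGroup E] [NormedSpace ℝ E]
  [NormedAddCommGroup F] [NormedSpace ℝ F]

theorem iteratedDeriv_comp_add_smul {n : ℕ} {f : E → F} (hf : ContDiff ℝ n f) (x₀ v : E)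
    (t : ℝ) :
    iteratedDeriv n (fun s : ℝ => f (x₀ + s • v)) t
      = iteratedFDeriv ℝ n f (x₀ + t • v) (fun _ => v) := by
  have hshift : ContDiff ℝ n (fun z => f (x₀ + z)) := hf.comp (contDiff_const.add contDiff_id)
  have hline := (ContinuousLinearMap.toSpanSingleton ℝ v).iteratedFDeriv_comp_right hshift t le_rfl
  simp only [Function.comp_def, ContinuousLinearMap.toSpanSingleton_apply] at hline
  rw [iteratedDeriv_eq_iteratedFDeriv, hline]
  simp [iteratedFDeriv_comp_add_left]

theorem norm_sub_sum_iteratedFDeriv_le {n : ℕ} {f : E → F} (hf : ContDiff ℝ (n + 1) f)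
    (x₀ v : E) {C : ℝ}
    (hC : ∀ t ∈ Icc (0 : ℝ) 1, ‖iteratedFDeriv ℝ (n + 1) f (x₀ + t • v) (fun _ => v)‖ ≤ C) :
    ‖f (x₀ + v) - ∑ m ∈ range (n + 1), (m ! : ℝ)⁻¹ • iteratedFDeriv ℝ m f x₀ (fun _ => v)‖
      ≤ C / n ! := by
  set g : ℝ → F := fun t => f (x₀ + t • v)
  have hg : ContDiff ℝ (n + 1) g :=
    hf.comp (contDiff_const.add (contDiff_id.smul contDiff_const))
  have hderiv : ∀ m ≤ n + 1, ∀ t ∈ Icc (0 : ℝ) 1, iteratedDerivWithin m g (Icc 0 1) t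
      = iteratedFDeriv ℝ m f (x₀ + t • v) (fun _ => v) := fun m hm t ht => by
    rw [iteratedDerivWithin_eq_iteratedDeriv (uniqueDiffOn_Icc one_pos)
      ((hg.of_le (by exact_mod_cast hm)).contDiffAt) ht,
      iteratedDeriv_comp_add_smul (hf.of_le (by exact_mod_cast hm))]
  have hrem := taylor_mean_remainder_bound zero_le_one hg.contDiffOn
    (right_mem_Icc.2 zero_le_one) fun t ht => (hderiv (n + 1) le_rfl t ht).symm ▸ hC t ht
  have htaylor : taylorWithinEval g n (Icc 0 1) 0 1
      = ∑ m ∈ range (n + 1), (m ! : ℝ)⁻¹ • iteratedFDeriv ℝ m f x₀ (fun _ => v) := by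
    rw [taylor_within_apply]
    refine sum_congr rfl fun m hm => ?_
    rw [hderiv m (mem_range.1 hm).le 0 (left_mem_Icc.2 zero_le_one)]
    simp
  simpa [g, htaylor] using hrem

end Taylor

theorem MultilinearMap.apply_const_eq_sum_single {R M ι : Type*} [CommSemiring R]
    [AddCommMonoid M] [Module R M] [Fintype ι] [DecidableEq ι] {n : ℕ}
    (μ : MultilinearMap R (fun _ : Fin n => ι → R) M) (v : ι → R) :
    μ (fun _ => v) = ∑ r : Fin n → ι, (∏ j, v (r j)) • μ (fun j => Pi.single (r j) 1) := by
  have hv : v = ∑ i, v i • Pi.single i (1 : R) := by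
    ext j; simp [Finset.sum_apply, Pi.single_apply]
  conv_lhs => rw [hv]
  rw [μ.map_sum]
  exact sum_congr rfl fun r _ => μ.map_smul_univ _ _

theorem ContinuousMultilinearMap.abs_apply_const_le {n d : ℕ}
    (μ : ContinuousMultilinearMap ℝ (fun _ : Fin n => Fin d → ℝ) ℝ) {v : Fin d → ℝ} {l M : ℝ}
    (hv : ∀ i, |v i| ≤ l) (hμ : ∀ r : Fin n → Fin d, |μ (fun j => Pi.single (r j) 1)| ≤ M) :
    |μ (fun _ => v)| ≤ d ^ n * l ^ n * M := by
  rw [← ContinuousMultilinearMap.coe_coe, MultilinearMap.apply_const_eq_sum_single]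
  have hterm : ∀ r : Fin n → Fin d,
      |(∏ j, v (r j)) • μ.toMultilinearMap (fun j => Pi.single (r j) 1)| ≤ l ^ n * M := by
    intro r
    have hprod : |∏ j, v (r j)| ≤ l ^ n := by
      rw [abs_prod]
      simpa using prod_le_prod (s := univ) (fun j _ => abs_nonneg (v (r j))) fun j _ => hv (r j)
    rw [smul_eq_mul, abs_mul]
    exact mul_le_mul hprod (hμ r) (abs_nonneg _) ((abs_nonneg _).trans hprod)
  calc _ ≤ ∑ r : Fin n → Fin d, l ^ n * M :=
        (abs_sum_le_sum_abs _ _).trans (sum_le_sum fun r _ => hterm r)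
    _ = d ^ n * l ^ n * M := by simp [mul_assoc]

section PartialDerivatives

variable {d : ℕ}

noncomputable def partialDerivList (d : ℕ) (L : List (Fin d)) (g : (Fin d → ℝ) → ℝ) :
    (Fin d → ℝ) → ℝ :=
  L.foldr (partialDeriv d) g

theorem contDiff_partialDeriv {g : (Fin d → ℝ) → ℝ} (hg : ContDiff ℝ (⊤ : ℕ∞) g) (i : Fin d) :
    ContDiff ℝ (⊤ : ℕ∞) (partialDeriv d i g) :=
  (hg.fderiv_right (m := (⊤ : ℕ∞)) (by simp)).clm_apply contDiff_const

theorem contDiff_partialDerivList {g : (Fin d → ℝ) → ℝ} (hg : ContDiff ℝ (⊤ : ℕ∞) g)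
    (L : List (Fin d)) : ContDiff ℝ (⊤ : ℕ∞) (partialDerivList d L g) := by
  induction L with
  | nil => exact hg
  | cons i L ih => exact contDiff_partialDeriv ih i

theorem partialDeriv_partialDeriv_apply {g : (Fin d → ℝ) → ℝ} (hg : ContDiff ℝ (⊤ : ℕ∞) g)
    (i j : Fin d) (x : Fin d → ℝ) :
    partialDeriv d i (partialDeriv d j g) x
      = fderiv ℝ (fderiv ℝ g) x (Pi.single i 1) (Pi.single j 1) := by
  have hd : Differentiable ℝ (fderiv ℝ g) :=
    (hg.fderiv_right (m := (⊤ : ℕ∞)) (by simp)).differentiable (by simp)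
  change fderiv ℝ (fun y => fderiv ℝ g y (Pi.single j 1)) x (Pi.single i 1) = _
  simp [fderiv_clm_apply (hd x) (differentiableAt_const _)]

theorem partialDeriv_comm {g : (Fin d → ℝ) → ℝ} (hg : ContDiff ℝ (⊤ : ℕ∞) g) (i j : Fin d) :
    partialDeriv d i (partialDeriv d j g) = partialDeriv d j (partialDeriv d i g) := by
  funext x
  rw [partialDeriv_partialDeriv_apply hg, partialDeriv_partialDeriv_apply hg]
  have hsmooth : minSmoothness ℝ 2 ≤ ((⊤ : ℕ∞) : WithTop ℕ∞) := by
    rw [minSmoothness_of_isRCLikeNormedField]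
    exact WithTop.coe_le_coe.2 le_top
  exact hg.contDiffAt.isSymmSndFDerivAt hsmooth _ _

theorem partialDerivList_perm {g : (Fin d → ℝ) → ℝ} (hg : ContDiff ℝ (⊤ : ℕ∞) g)
    {L₁ L₂ : List (Fin d)} (h : L₁.Perm L₂) :
    partialDerivList d L₁ g = partialDerivList d L₂ g := by
  induction h with
  | nil => rfl
  | cons i _ ih => exact congrArg (partialDeriv d i) ih
  | swap i j L => exact partialDeriv_comm (contDiff_partialDerivList hg L) j i
  | trans _ _ ih₁ ih₂ => exact ih₁.trans ih₂

theorem multiDeriv_eq_partialDerivList (α : Fin d → ℕ) (g : (Fin d → ℝ) → ℝ) :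
    multiDeriv d α g
      = partialDerivList d ((List.finRange d).flatMap fun i => List.replicate (α i) i) g := by
  have hiter : ∀ i n ψ, partialDerivIter d i n ψ = partialDerivList d (List.replicate n i) ψ := by
    intro i n ψ
    induction n with
    | zero => rfl
    | succ n ih => exact congrArg (partialDeriv d i) ih
  unfold multiDeriv
  induction List.finRange d with
  | nil => rfl
  | cons i L ih =>
    rw [List.foldr_cons, ih, hiter, List.flatMap_cons]
    simp only [partialDerivList, List.foldr_append]

theorem partialDerivList_ofFn {g : (Fin d → ℝ) → ℝ} (hg : ContDiff ℝ (⊤ : ℕ∞) g) {n : ℕ}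
    (r : Fin n → Fin d) (x : Fin d → ℝ) :
    partialDerivList d (List.ofFn r) g x
      = iteratedFDeriv ℝ n g x (fun j => Pi.single (r j) 1) := by
  induction n generalizing x with
  | zero => simp [partialDerivList]
  | succ n ih =>
    have hd : Differentiable ℝ (iteratedFDeriv ℝ n g) :=
      hg.differentiable_iteratedFDeriv (by exact_mod_cast ENat.natCast_lt_top n)
    rw [List.ofFn_succ, iteratedFDeriv_succ_apply_left]
    change fderiv ℝ (partialDerivList d (List.ofFn fun j => r j.succ) g) x _ = _
    rw [funext (ih (fun j => r j.succ)), fderiv_continuousMultilinear_apply_const_apply (hd x)]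
    rfl

theorem exists_multiDeriv_eq_iteratedFDeriv {g : (Fin d → ℝ) → ℝ} (hg : ContDiff ℝ (⊤ : ℕ∞) g)
    {n : ℕ} (r : Fin n → Fin d) :
    ∃ α : Fin d → ℕ, ∑ i, α i = n ∧
      ∀ x, iteratedFDeriv ℝ n g x (fun j => Pi.single (r j) 1) = multiDeriv d α g x := by
  set α : Fin d → ℕ := fun i => (List.ofFn r).count i
  have hperm :
      (List.ofFn r).Perm ((List.finRange d).flatMap fun i => List.replicate (α i) i) := by
    rw [List.perm_iff_count]
    intro i
    simp [α, List.count_flatMap, List.count_replicate, Function.comp_def, ← Fin.sum_univ_def]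
  refine ⟨α, ?_, fun x => ?_⟩
  · simpa [List.length_flatMap, ← Fin.sum_univ_def] using hperm.length_eq.symm
  · rw [← partialDerivList_ofFn hg, multiDeriv_eq_partialDerivList,
      partialDerivList_perm hg hperm]

end PartialDerivatives

section TaylorPolynomial

open MvPolynomial

variable {d : ℕ}

noncomputable def taylorMvPoly (f : (Fin d → ℝ) → ℝ) (x₀ : Fin d → ℝ) (k : ℕ) :
    MvPolynomial (Fin d) ℝ :=
  ∑ m ∈ range k, ∑ r : Fin m → Fin d,
    C ((m ! : ℝ)⁻¹ * iteratedFDeriv ℝ m f x₀ (fun j => Pi.single (r j) 1)) *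
      ∏ j, (X (r j) - C (x₀ (r j)))

theorem totalDegree_taylorMvPoly_le (f : (Fin d → ℝ) → ℝ) (x₀ : Fin d → ℝ) (k : ℕ) :
    (taylorMvPoly f x₀ k).totalDegree ≤ k - 1 := by
  refine (totalDegree_finsetSum _ _).trans <| Finset.sup_le fun m hm => ?_
  refine (totalDegree_finsetSum _ _).trans <| Finset.sup_le fun r _ => ?_
  have hfactor : ∀ j, (X (r j) - C (x₀ (r j)) : MvPolynomial (Fin d) ℝ).totalDegree ≤ 1 :=
    fun j => (totalDegree_sub _ _).trans (by simp)
  calc _ ≤ (C _ : MvPolynomial (Fin d) ℝ).totalDegree + _ := totalDegree_mul _ _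
    _ ≤ 0 + ∑ j : Fin m, 1 := by
        rw [totalDegree_C]
        exact add_le_add_right
          ((totalDegree_finsetProd _ _).trans (sum_le_sum fun j _ => hfactor j)) _
    _ ≤ k - 1 := by
        have := mem_range.1 hm
        simp only [zero_add, sum_const, card_univ, Fintype.card_fin, smul_eq_mul, mul_one]
        omega

theorem eval_taylorMvPoly (f : (Fin d → ℝ) → ℝ) (x₀ x : Fin d → ℝ) (k : ℕ) :
    eval x (taylorMvPoly f x₀ k)
      = ∑ m ∈ range k, (m ! : ℝ)⁻¹ * iteratedFDeriv ℝ m f x₀ (fun _ => x - x₀) := by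
  simp only [taylorMvPoly, map_sum, map_mul, map_prod, eval_C, map_sub, eval_X]
  refine sum_congr rfl fun m _ => ?_
  rw [← ContinuousMultilinearMap.coe_coe, MultilinearMap.apply_const_eq_sum_single, mul_sum]
  refine sum_congr rfl fun r _ => ?_
  simp only [smul_eq_mul, Pi.sub_apply, ContinuousMultilinearMap.coe_coe]
  ring

theorem abs_sub_eval_taylorMvPoly_le {f : (Fin d → ℝ) → ℝ} (hf : ContDiff ℝ (⊤ : ℕ∞) f)
    {k : ℕ} (hk : 1 ≤ k) {K : Set (Fin d → ℝ)} (hK : Convex ℝ K) {M : ℝ}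
    (hM : ∀ α : Fin d → ℕ, ∑ i, α i = k → ∀ y ∈ K, |multiDeriv d α f y| ≤ M)
    {x₀ x : Fin d → ℝ} (hx₀ : x₀ ∈ K) (hx : x ∈ K) {l : ℝ} (hl : ∀ i, |x i - x₀ i| ≤ l) :
    |f x - eval x (taylorMvPoly f x₀ k)| ≤ d ^ k * l ^ k * M := by
  obtain ⟨n, rfl⟩ : ∃ n, k = n + 1 := ⟨k - 1, by omega⟩
  have hC : ∀ t ∈ Icc (0 : ℝ) 1,
      ‖iteratedFDeriv ℝ (n + 1) f (x₀ + t • (x - x₀)) (fun _ => x - x₀)‖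
        ≤ d ^ (n + 1) * l ^ (n + 1) * M := by
    intro t ht
    refine (iteratedFDeriv ℝ (n + 1) f _).abs_apply_const_le hl fun r => ?_
    obtain ⟨α, hα, hαr⟩ := exists_multiDeriv_eq_iteratedFDeriv hf r
    rw [hαr]
    exact hM α hα _ (hK.add_smul_sub_mem hx₀ hx ht)
  have hC₀ : 0 ≤ (d : ℝ) ^ (n + 1) * l ^ (n + 1) * M :=
    (norm_nonneg _).trans (hC 0 (left_mem_Icc.2 zero_le_one))
  have hrem :=
    norm_sub_sum_iteratedFDeriv_le (hf.of_le (by exact_mod_cast le_top)) x₀ (x - x₀) hC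
  rw [add_sub_cancel, Real.norm_eq_abs] at hrem
  rw [eval_taylorMvPoly]
  exact hrem.trans (div_le_self hC₀ (by exact_mod_cast n.factorial_pos))

end TaylorPolynomial

section Variation

open MvPolynomial

variable {d k : ℕ}

theorem Ek_le_of_abs_sub_le {q : ℝ≥0∞} {f : (Fin d → ℝ) → ℝ} {S : Set (Fin d → ℝ)}
    (hS : MeasurableSet S) {P : MvPolynomial (Fin d) ℝ} (hP : P.totalDegree ≤ k - 1) {C : ℝ}
    (hC : ∀ x ∈ S, |f x - eval x P| ≤ C) :
    Ek d k q f S ≤ volume S ^ q.toReal⁻¹ * ENNReal.ofReal C := by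
  refine (iInf₂_le P hP).trans ?_
  have hbound : ∀ᵐ x ∂volume.restrict S, ‖f x - eval x P‖ ≤ C :=
    (ae_restrict_iff' hS).2 (ae_of_all _ hC)
  simpa using eLpNorm_le_of_ae_bound hbound

theorem volume_pi_Ico_add (x : Fin d → ℝ) (l : ℝ) :
    volume (univ.pi fun i => Ico (x i) (x i + l)) = ENNReal.ofReal l ^ d := by
  simp [volume_pi_pi, Real.volume_Ico]

theorem IsCube.measurableSet {Q : Set (Fin d → ℝ)} (hQ : IsCube d Q) : MeasurableSet Q := by
  obtain ⟨x, l, -, rfl⟩ := hQ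
  exact MeasurableSet.univ_pi fun _ => measurableSet_Ico

theorem varpk_le_of_forall_isCube {p : ℝ} (hp : 0 < p) {q : ℝ≥0∞} {f : (Fin d → ℝ) → ℝ}
    {S : Set (Fin d → ℝ)} {B : ℝ≥0∞}
    (hB : ∀ Q, IsCube d Q → Q ⊆ S → Ek d k q f Q ^ p ≤ B ^ p * volume Q) :
    varpk d k p q f S ≤ B * volume S ^ (1 / p) := by
  refine iSup_le fun Δ => iSup_le fun hΔ => iSup_le fun hdisj => ?_
  have hsum : ∑ Q ∈ Δ, Ek d k q f Q ^ p ≤ B ^ p * volume S :=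
    calc ∑ Q ∈ Δ, Ek d k q f Q ^ p ≤ ∑ Q ∈ Δ, B ^ p * volume Q :=
          sum_le_sum fun Q hQ => hB Q (hΔ Q hQ).1 (hΔ Q hQ).2
      _ = B ^ p * volume (⋃ Q ∈ Δ, Q) := by
          rw [← mul_sum]
          exact congrArg _
            (measure_biUnion_finset hdisj fun Q hQ => (hΔ Q hQ).1.measurableSet).symm
      _ ≤ B ^ p * volume S := by
          gcongr
          exact iUnion₂_subset fun Q hQ => (hΔ Q hQ).2
  calc (∑ Q ∈ Δ, Ek d k q f Q ^ p) ^ (1 / p) ≤ (B ^ p * volume S) ^ (1 / p) := by gcongr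
    _ = B * volume S ^ (1 / p) := by
        rw [ENNReal.mul_rpow_of_nonneg _ _ (by positivity), ← ENNReal.rpow_mul,
          mul_one_div_cancel hp.ne', ENNReal.rpow_one]

noncomputable def derivSupNorm (d k : ℕ) (f : (Fin d → ℝ) → ℝ) : ℝ≥0∞ :=
  ⨆ (α : Fin d → ℕ) (_ : (∑ i, α i) = k),
    ⨆ x ∈ Set.Icc (0 : Fin d → ℝ) 1, (‖multiDeriv d α f x‖₊ : ℝ≥0∞)

theorem abs_multiDeriv_le_toReal_derivSupNorm {f : (Fin d → ℝ) → ℝ}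
    (hf : derivSupNorm d k f ≠ ⊤) {α : Fin d → ℕ} (hα : ∑ i, α i = k)
    {y : Fin d → ℝ} (hy : y ∈ Set.Icc 0 1) :
    |multiDeriv d α f y| ≤ (derivSupNorm d k f).toReal := by
  have hle : (‖multiDeriv d α f y‖₊ : ℝ≥0∞) ≤ derivSupNorm d k f :=
    le_iSup₂_of_le α hα <| le_iSup₂_of_le (f := fun x (_ : x ∈ Icc (0 : Fin d → ℝ) 1) =>
      (‖multiDeriv d α f x‖₊ : ℝ≥0∞)) y hy le_rfl
  simpa using ENNReal.toReal_mono hf hle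

theorem Ek_rpow_le_of_isCube {p : ℝ} {q : ℝ≥0∞} {f : (Fin d → ℝ) → ℝ}
    (hf : ContDiff ℝ (⊤ : ℕ∞) f) (hk : 1 ≤ k) (hd : d ≠ 0) (hp : 0 < p)
    (hexp : (d : ℝ) ≤ (k + d * q.toReal⁻¹) * p) {Q : Set (Fin d → ℝ)} (hQ : IsCube d Q)
    (hQ₁ : Q ⊆ unitCube d) :
    Ek d k q f Q ^ p ≤ (ENNReal.ofReal ((d : ℝ) ^ k) * derivSupNorm d k f) ^ p * volume Q := by
  have hQm := hQ.measurableSet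
  obtain ⟨x₀, l, hl, rfl⟩ := hQ
  set t := ENNReal.ofReal l
  have ht₀ : t ≠ 0 := (ENNReal.ofReal_pos.2 hl).ne'
  have hvol := volume_pi_Ico_add x₀ l
  by_cases htop : derivSupNorm d k f = ⊤
  · have hd' : ENNReal.ofReal ((d : ℝ) ^ k) ≠ 0 :=
      (ENNReal.ofReal_pos.2 (pow_pos (Nat.cast_pos.2 (Nat.pos_of_ne_zero hd)) k)).ne'
    rw [htop, ENNReal.mul_top hd', ENNReal.top_rpow_of_pos hp,
      ENNReal.top_mul (by rw [hvol]; exact pow_ne_zero _ ht₀)]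
    exact le_top
  have ht₁ : t ≤ 1 := by
    have h : volume (univ.pi fun i => Ico (x₀ i) (x₀ i + l)) ≤ volume (unitCube d) :=
      measure_mono hQ₁
    have hunit : volume (unitCube d) = 1 := by
      simp [unitCube, volume_pi_pi, Real.volume_Ico]
    rw [hvol, hunit] at h
    exact (pow_le_one_iff hd).1 h
  have hIcc : unitCube d ⊆ Icc 0 1 := fun y hy =>
    ⟨fun i => (hy i (mem_univ i)).1, fun i => (hy i (mem_univ i)).2.le⟩
  set M := (derivSupNorm d k f).toReal
  have hEk : Ek d k q f (univ.pi fun i => Ico (x₀ i) (x₀ i + l))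
      ≤ t ^ (d * q.toReal⁻¹) * ENNReal.ofReal ((d : ℝ) ^ k * l ^ k * M) := by
    rw [ENNReal.rpow_mul, ENNReal.rpow_natCast, ← hvol]
    refine Ek_le_of_abs_sub_le hQm (totalDegree_taylorMvPoly_le f x₀ k) fun x hx => ?_
    have hx₀ : x₀ ∈ univ.pi fun i => Ico (x₀ i) (x₀ i + l) :=
      fun i _ => ⟨le_rfl, by linarith⟩
    refine abs_sub_eval_taylorMvPoly_le hf hk (convex_Icc 0 1)
      (fun α hα y hy => abs_multiDeriv_le_toReal_derivSupNorm htop hα hy)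
      (hIcc (hQ₁ hx₀)) (hIcc (hQ₁ hx)) fun i => ?_
    have hxi := hx i (mem_univ i)
    rw [abs_of_nonneg (by linarith [hxi.1])]
    linarith [hxi.2]
  have hsplit : ENNReal.ofReal ((d : ℝ) ^ k * l ^ k * M)
      = ENNReal.ofReal ((d : ℝ) ^ k) * derivSupNorm d k f * t ^ (k : ℝ) := by
    rw [ENNReal.ofReal_mul (by positivity), ENNReal.ofReal_mul (by positivity),
      ENNReal.ofReal_pow hl.le, ENNReal.ofReal_toReal htop, ENNReal.rpow_natCast]
    ring
  calc Ek d k q f _ ^ p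
      ≤ (ENNReal.ofReal ((d : ℝ) ^ k) * derivSupNorm d k f) ^ p
          * t ^ ((k + d * q.toReal⁻¹) * p) := by
        rw [ENNReal.rpow_mul, ENNReal.rpow_add _ _ ht₀ ENNReal.ofReal_ne_top,
          ← ENNReal.mul_rpow_of_nonneg _ _ hp.le, ← mul_assoc, ← hsplit, mul_comm]
        gcongr
    _ ≤ (ENNReal.ofReal ((d : ℝ) ^ k) * derivSupNorm d k f) ^ p * t ^ (d : ℝ) :=
        mul_le_mul_right (ENNReal.rpow_le_rpow_of_exponent_ge ht₁ hexp) _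
    _ = _ := by rw [hvol, ENNReal.rpow_natCast]

end Variation

theorem statement9_general (d k : ℕ) :
    ∃ c : ℝ, 0 < c ∧
      ∀ (p : ℝ) (q : ℝ≥0∞) (s : ℝ), 1 ≤ p → 1 ≤ q →
        s = d * (1 / p - (q⁻¹).toReal) → 0 < s → s ≤ k →
        ∀ f : (Fin d → ℝ) → ℝ, ContDiff ℝ (⊤ : ℕ∞) f →
        ∀ S : Set (Fin d → ℝ),
          MeasurableSet[MeasurableSpace.generateFrom {Q | IsDyadicCube d Q}] S →
          S ⊆ unitCube d →
          varpk d k p q f S ≤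
            ENNReal.ofReal c * volume S ^ (1 / p) *
              ⨆ (α : Fin d → ℕ) (_ : (∑ i, α i) = k),
                ⨆ x ∈ Set.Icc (0 : Fin d → ℝ) 1, (‖multiDeriv d α f x‖₊ : ℝ≥0∞) := by
  refine ⟨(d : ℝ) ^ k + 1, by positivity, fun p q s hp _ hs hs₀ hsk f hf S _ hS => ?_⟩
  have hp₀ : 0 < p := one_pos.trans_le hp
  have hd : d ≠ 0 := by rintro rfl; simp [hs] at hs₀
  have hk : 1 ≤ k := Nat.cast_pos.1 (hs₀.trans_le hsk)
  have hexp : (d : ℝ) ≤ (k + d * q.toReal⁻¹) * p := by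
    rw [ENNReal.toReal_inv] at hs
    calc (d : ℝ) = d * (1 / p) * p := by field_simp
      _ ≤ (k + d * q.toReal⁻¹) * p := by gcongr; linarith
  calc varpk d k p q f S
      ≤ ENNReal.ofReal ((d : ℝ) ^ k) * derivSupNorm d k f * volume S ^ (1 / p) :=
        varpk_le_of_forall_isCube hp₀ fun Q hQ hQS =>
          Ek_rpow_le_of_isCube hf hk hd hp₀ hexp hQ (hQS.trans hS)
    _ ≤ ENNReal.ofReal ((d : ℝ) ^ k + 1) * volume S ^ (1 / p) * derivSupNorm d k f := by
        rw [mul_right_comm]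
        gcongr
        linarith

/-- Proposition 3.2: for a `C^∞` function `f` and a space
`V_{pq}^k` of smoothness `s = d(1/p - 1/q) ∈ (0,k]`, one has
`var_p^k(f;S;L_q) ≤ c(k,d) |S|^{1/p} max_{|α|=k} sup_{[0,1]^d} |D^α f|` for every
set `S` in the σ-algebra generated by the dyadic subcubes of `[0,1)^d`; in
particular `var_p^k(f;S;L_q) → 0` as `|S| → 0`, uniformly in `S`. -/
theorem statement9 (d k : ℕ) (hk : 1 ≤ k) :
    ∃ c : ℝ, 0 < c ∧
      ∀ (p : ℝ) (q : ℝ≥0∞) (s : ℝ), 1 ≤ p → 1 ≤ q →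
        s = d * (1 / p - (q⁻¹).toReal) → 0 < s → s ≤ k →
        ∀ f : (Fin d → ℝ) → ℝ, ContDiff ℝ (⊤ : ℕ∞) f →
        ∀ S : Set (Fin d → ℝ),
          MeasurableSet[MeasurableSpace.generateFrom {Q | IsDyadicCube d Q}] S →
          S ⊆ unitCube d →
          varpk d k p q f S ≤
            ENNReal.ofReal c * volume S ^ (1 / p) *
              ⨆ (α : Fin d → ℕ) (_ : (∑ i, α i) = k),
                ⨆ x ∈ Set.Icc (0 : Fin d → ℝ) 1, (‖multiDeriv d α f x‖₊ : ℝ≥0∞) :=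
  statement9_general d k
end
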